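/- For every a ∈ {1,…,N}, the operator Λ^{(1)}(λ) · R^{(1,n)}(z_1−z_n) R^{(1,n−1)}(z_1−z_{n−1}) ⋯ R^{(1,2)}(z_1−z_2) on W = (ℂ^N)^{⊗n} commutes with L_a(z;λ): [Λ^{(1)}(λ) R^{(1,n)}(z_1−z_n) ⋯ R^{(1,2)}(z_1−z_2), L_a(z;λ)] = 0. (This is the key identity in the proof that the qKZ operators commute with the dynamical operators, here for tensor products of vector representations of gl_N.) -/

import Mathlib

noncomputable section

/-- Basis of `W = (ℂ^N)^{⊗n}`: multi-indices `Fin n → Fin N`. -/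
abbrev BIdx (N n : ℕ) := Fin n → Fin N

/-- `End(W)` realized as matrices in the standard tensor basis of `W = (ℂ^N)^{⊗n}`. -/
abbrev EndW (N n : ℕ) := Matrix (BIdx N n) (BIdx N n) ℂ

/-- `E_{a,b}^{(i)}`: the matrix unit `E_{a,b}` of `gl_N` acting in the `i`-th tensor
factor of `W` (it sends the basis vector `e_{m}` to `e_{m[i ↦ a]}` if `m i = b`). -/
def Ei {N n : ℕ} (i : Fin n) (a b : Fin N) : EndW N n :=
  Matrix.of fun k m => if k = Function.update m i a ∧ m i = b then 1 else 0

/-- `E_{a,b} = Σ_i E_{a,b}^{(i)}`. -/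
def Etot {N n : ℕ} (a b : Fin N) : EndW N n := ∑ i, Ei i a b

/-- The flip `P` acting in the `i`-th and `j`-th tensor factors of `W`. -/
def Pflip {N n : ℕ} (i j : Fin n) : EndW N n :=
  Matrix.of fun k m => if k = m ∘ Equiv.swap i j then 1 else 0

/-- The rational R-matrix `R(x) = (x·Id + P)/(x+1)` acting in factors `i,j` of `W`. -/
def Rm {N n : ℕ} (x : ℂ) (i j : Fin n) : EndW N n :=
  (x + 1)⁻¹ • (x • (1 : EndW N n) + Pflip i j)

/-- `Λ^{(m)}(λ) = diag(λ_1,…,λ_N)` acting in the `m`-th tensor factor of `W`. -/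
def LamD {N n : ℕ} (lam : Fin N → ℂ) (m : Fin n) : EndW N n :=
  Matrix.diagonal fun k => lam (k m)

/-- The dynamical operator coefficient `L_a(z;λ)` on `W`. -/
def Ldyn {N n : ℕ} (z : Fin n → ℂ) (lam : Fin N → ℂ) (a : Fin N) : EndW N n :=
  (2⁻¹ : ℂ) • (Etot a a) ^ 2
  - ∑ i, z i • Ei i a a
  - ∑ b : Fin N, ∑ i : Fin n, ∑ j : Fin n, (if i < j then Ei i a b * Ei j b a else 0)
  - ∑ b ∈ Finset.univ.erase a,
      (lam b / (lam a - lam b)) • (Etot a b * Etot b a - Etot a a)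

/-- Ordered product `R^{(1,m)}(z_1−z_m−p) ⋯ R^{(m−1,m)}(z_{m−1}−z_m−p)`. -/
def Kleft {N n : ℕ} (p : ℂ) (z : Fin n → ℂ) (m : Fin n) : EndW N n :=
  (((List.finRange n).filter (fun i => i < m)).map fun i => Rm (z i - z m - p) i m).prod

/-- Ordered product `R^{(m,n)}(z_m−z_n) R^{(m,n−1)}(z_m−z_{n−1}) ⋯ R^{(m,m+1)}(z_m−z_{m+1})`. -/
def Kright {N n : ℕ} (z : Fin n → ℂ) (m : Fin n) : EndW N n :=
  (((List.finRange n).filter (fun j => m < j)).reverse.map fun j => Rm (z m - z j) m j).prod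

/-- The qKZ operator coefficient `K_m(z;λ)` on `W`. -/
def Kqkz {N n : ℕ} (p : ℂ) (z : Fin n → ℂ) (lam : Fin N → ℂ) (m : Fin n) : EndW N n :=
  (Kleft p z m)⁻¹ * LamD lam m * Kright z m

/-- The genericity condition on `z`: for `i ≠ j`, the numbers `z_i−z_j`, `z_i−z_j+p`,
`z_i−z_j−p` avoid `{1, −1}`, so all R-matrix factors are defined and invertible. -/
def ZGeneric {n : ℕ} (p : ℂ) (z : Fin n → ℂ) : Prop :=
  ∀ i j : Fin n, i ≠ j →
    ∀ x ∈ ({z i - z j, z i - z j + p, z i - z j - p} : Set ℂ), x ≠ 1 ∧ x ≠ -1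
namespace QKZ

open Function Equiv Finset Matrix

variable {N n : ℕ}

/-! ### Entrywise action lemmas -/

lemma ei_apply (i : Fin n) (a b : Fin N) (k m : BIdx N n) :
    Ei i a b k m = if k = Function.update m i a ∧ m i = b then 1 else 0 := rfl

lemma mul_Ei_apply (Y : EndW N n) (i : Fin n) (a b : Fin N) (k m : BIdx N n) :
    (Y * Ei i a b) k m = if m i = b then Y k (Function.update m i a) else 0 := by
  rw [Matrix.mul_apply]
  simp only [ei_apply, mul_ite, mul_one, mul_zero]
  by_cases h : m i = b
  · simp only [h, and_true, Finset.sum_ite_eq', Finset.mem_univ, if_true]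
  · simp [h]

lemma Ei_mul_apply (i : Fin n) (a b : Fin N) (Y : EndW N n) (k m : BIdx N n) :
    (Ei i a b * Y) k m = if k i = a then Y (Function.update k i b) m else 0 := by
  rw [Matrix.mul_apply]
  have key : ∀ l : BIdx N n,
      (k = Function.update l i a ∧ l i = b) ↔ (l = Function.update k i b ∧ k i = a) := by
    intro l
    constructor
    · rintro ⟨rfl, h2⟩
      refine ⟨?_, by simp⟩
      funext x
      by_cases hx : x = i
      · subst hx; simp [h2]
      · simp [hx]
    · rintro ⟨rfl, h2⟩
      refine ⟨?_, by simp⟩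
      funext x
      by_cases hx : x = i
      · subst hx; simp [h2]
      · simp [hx]
  simp only [ei_apply, ite_mul, one_mul, zero_mul, key, ite_and]
  by_cases h : k i = a
  · simp only [h, if_true, Finset.sum_ite_eq', Finset.mem_univ]
  · simp [h]

lemma pflip_apply (i j : Fin n) (k m : BIdx N n) :
    (Pflip i j : EndW N n) k m = if k = m ∘ Equiv.swap i j then 1 else 0 := rfl

lemma comp_swap_eq_iff {f g : BIdx N n} {i j : Fin n} :
    f = g ∘ Equiv.swap i j ↔ f ∘ Equiv.swap i j = g := by
  constructor
  · rintro rfl; funext x; simp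
  · rintro rfl; funext x; simp

lemma Pflip_mul_apply (i j : Fin n) (Y : EndW N n) (k m : BIdx N n) :
    ((Pflip i j * Y : EndW N n)) k m = Y (k ∘ Equiv.swap i j) m := by
  rw [Matrix.mul_apply]
  have key : ∀ l : BIdx N n, (k = l ∘ Equiv.swap i j) ↔ (l = k ∘ Equiv.swap i j) := by
    intro l
    rw [comp_swap_eq_iff]
    constructor
    · rintro rfl; rfl
    · rintro rfl; rfl
  simp only [pflip_apply, ite_mul, one_mul, zero_mul, key]
  simp [Finset.sum_ite_eq']

lemma mul_Pflip_apply (Y : EndW N n) (i j : Fin n) (k m : BIdx N n) :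
    ((Y * Pflip i j : EndW N n)) k m = Y k (m ∘ Equiv.swap i j) := by
  rw [Matrix.mul_apply]
  simp only [pflip_apply, mul_ite, mul_one, mul_zero]
  simp [Finset.sum_ite_eq']

lemma LamD_mul_apply (lam : Fin N → ℂ) (p : Fin n) (Y : EndW N n) (k m : BIdx N n) :
    (LamD lam p * Y) k m = lam (k p) * Y k m := by
  rw [LamD, Matrix.diagonal_mul]

lemma mul_LamD_apply (Y : EndW N n) (lam : Fin N → ℂ) (p : Fin n) (k m : BIdx N n) :
    (Y * LamD lam p) k m = Y k m * lam (m p) := by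
  rw [LamD, Matrix.mul_diagonal]

end QKZ
namespace QKZ
open Function Equiv Finset Matrix
variable {N n : ℕ}

/-! ### Pflip products -/

lemma Pflip_mul_Pflip (i j i' j' : Fin n) :
    (Pflip i j * Pflip i' j' : EndW N n)
      = Matrix.of fun k m => if k = m ∘ Equiv.swap i' j' ∘ Equiv.swap i j then 1 else 0 := by
  ext k m
  rw [Pflip_mul_apply, pflip_apply, Matrix.of_apply]
  congr 1
  rw [eq_iff_iff]
  constructor
  · intro h
    funext x
    have := congrFun h ((Equiv.swap i j) x)
    simpa using this
  · rintro rfl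
    funext x
    simp

lemma Pflip_comm (i j : Fin n) : (Pflip i j : EndW N n) = Pflip j i := by
  unfold Pflip; rw [Equiv.swap_comm]

lemma Pflip_mul_self (i j : Fin n) : (Pflip i j * Pflip i j : EndW N n) = 1 := by
  rw [Pflip_mul_Pflip]
  ext k m
  rw [Matrix.of_apply, Matrix.one_apply]
  congr 1
  rw [eq_iff_iff]
  constructor
  · intro h; funext x
    have := congrFun h x
    simpa using this
  · rintro rfl; funext x; simp

lemma swap_comp_swap {i j k : Fin n} (hij : i ≠ j) (hik : i ≠ k) (hjk : j ≠ k) :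
    ⇑(Equiv.swap i k) ∘ ⇑(Equiv.swap i j) = ⇑(Equiv.swap i j) ∘ ⇑(Equiv.swap j k) := by
  funext x
  simp only [Function.comp_apply, Equiv.swap_apply_def]
  split_ifs <;> simp_all

lemma braid (i j k : Fin n) (hij : i ≠ j) (hik : i ≠ k) (hjk : j ≠ k) :
    (Pflip i j * Pflip i k : EndW N n) = Pflip j k * Pflip i j := by
  rw [Pflip_mul_Pflip, Pflip_mul_Pflip]
  ext k' m
  rw [Matrix.of_apply, Matrix.of_apply]
  have h := swap_comp_swap hij hik hjk
  congr 2
  funext x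
  have hx := congrFun h x
  simp only [Function.comp_apply] at hx ⊢
  exact congrArg m hx

lemma swap_comp_swap_disj {i j k l : Fin n} (h1 : i ≠ k) (h2 : i ≠ l) (h3 : j ≠ k) (h4 : j ≠ l) :
    ⇑(Equiv.swap k l) ∘ ⇑(Equiv.swap i j) = ⇑(Equiv.swap i j) ∘ ⇑(Equiv.swap k l) := by
  funext x
  simp only [Function.comp_apply, Equiv.swap_apply_def]
  split_ifs <;> simp_all

lemma Pflip_mul_Pflip_disj {i j k l : Fin n} (h1 : i ≠ k) (h2 : i ≠ l) (h3 : j ≠ k) (h4 : j ≠ l) :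
    (Pflip i j * Pflip k l : EndW N n) = Pflip k l * Pflip i j := by
  rw [Pflip_mul_Pflip, Pflip_mul_Pflip]
  ext k' m
  rw [Matrix.of_apply, Matrix.of_apply]
  have h := swap_comp_swap_disj h1 h2 h3 h4
  congr 2
  funext x
  have hx := congrFun h x
  simp only [Function.comp_apply] at hx ⊢
  exact congrArg m hx

/-! ### Pflip and Ei -/

lemma Pflip_mul_Ei (i j p : Fin n) (a b : Fin N) :
    (Pflip i j * Ei p a b : EndW N n) = Ei (Equiv.swap i j p) a b * Pflip i j := by
  ext k m
  rw [Pflip_mul_apply, mul_Pflip_apply, ei_apply, ei_apply]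
  congr 1
  rw [eq_iff_iff]
  have hm : (m ∘ Equiv.swap i j) (Equiv.swap i j p) = m p := by simp
  rw [hm]
  have hupd : Function.update (m ∘ ⇑(Equiv.swap i j)) (Equiv.swap i j p) a
      = (Function.update m p a) ∘ ⇑(Equiv.swap i j) := by
    funext x
    by_cases hx : x = Equiv.swap i j p
    · subst hx
      rw [Function.update_self, Function.comp_apply, Equiv.swap_apply_self,
        Function.update_self]
    · rw [Function.update_of_ne hx]
      have : Equiv.swap i j x ≠ p := by
        intro hc
        apply hx
        rw [← hc]; simp
      simp [Function.update_of_ne this]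
  rw [hupd]
  constructor
  · rintro ⟨h1, h2⟩; exact ⟨comp_swap_eq_iff.mpr h1, h2⟩
  · rintro ⟨h1, h2⟩; exact ⟨comp_swap_eq_iff.mp h1, h2⟩

end QKZ
namespace QKZ
open Function Equiv Finset Matrix
variable {N n : ℕ}

lemma update_eq_update_iff_ne {i j : Fin n} (hij : i ≠ j) (k m : BIdx N n) (b c : Fin N) :
    Function.update k i b = Function.update m j c
      ↔ (m i = b ∧ k j = c ∧ ∀ x, x ≠ i → x ≠ j → k x = m x) := by
  constructor
  · intro h
    refine ⟨?_, ?_, ?_⟩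
    · have := congrFun h i
      rw [Function.update_self, Function.update_of_ne hij] at this
      exact this.symm
    · have := congrFun h j
      rw [Function.update_self, Function.update_of_ne (Ne.symm hij)] at this
      exact this
    · intro x hxi hxj
      have := congrFun h x
      rwa [Function.update_of_ne hxi, Function.update_of_ne hxj] at this
  · rintro ⟨h1, h2, h3⟩
    funext x
    by_cases hxi : x = i
    · subst hxi; rw [Function.update_self, Function.update_of_ne hij, h1]
    · by_cases hxj : x = j
      · subst hxj; rw [Function.update_self, Function.update_of_ne (Ne.symm hij), h2]
      · rw [Function.update_of_ne hxi, Function.update_of_ne hxj]; exact h3 x hxi hxj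

lemma update_eq_update_iff_same (i : Fin n) (k m : BIdx N n) (b c : Fin N) :
    Function.update k i b = Function.update m i c
      ↔ (b = c ∧ ∀ x, x ≠ i → k x = m x) := by
  constructor
  · intro h
    refine ⟨?_, ?_⟩
    · have := congrFun h i
      rwa [Function.update_self, Function.update_self] at this
    · intro x hxi
      have := congrFun h x
      rwa [Function.update_of_ne hxi, Function.update_of_ne hxi] at this
  · rintro ⟨rfl, h3⟩
    funext x
    by_cases hxi : x = i
    · subst hxi; rw [Function.update_self, Function.update_self]
    · rw [Function.update_of_ne hxi, Function.update_of_ne hxi]; exact h3 x hxi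

lemma eq_update_iff'' (k m : BIdx N n) (i : Fin n) (a : Fin N) :
    k = Function.update m i a ↔ (k i = a ∧ ∀ x, x ≠ i → k x = m x) :=
  Function.eq_update_iff

lemma Ei_mul_Ei_apply {i j : Fin n} (hij : i ≠ j) (a b c d : Fin N) (k m : BIdx N n) :
    (Ei i a b * Ei j c d : EndW N n) k m
      = if (k i = a ∧ m i = b ∧ k j = c ∧ m j = d ∧ ∀ x, x ≠ i → x ≠ j → k x = m x)
        then 1 else 0 := by
  rw [Ei_mul_apply]
  simp only [ei_apply, update_eq_update_iff_ne hij]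
  by_cases h1 : k i = a
  · simp only [h1, if_pos, true_and]
    congr 1
    rw [eq_iff_iff]
    have e1 : Function.update k i b i = b := Function.update_self _ _ _
    tauto
  · rw [if_neg h1, eq_comm, if_neg]
    tauto

lemma Ei_mul_Ei_comm {i j : Fin n} (hij : i ≠ j) (a b c d : Fin N) :
    (Ei i a b * Ei j c d : EndW N n) = Ei j c d * Ei i a b := by
  ext k m
  rw [Ei_mul_Ei_apply hij, Ei_mul_Ei_apply (Ne.symm hij)]
  congr 1
  rw [eq_iff_iff]
  constructor
  · rintro ⟨x1, x2, x3, x4, x5⟩; exact ⟨x3, x4, x1, x2, fun x p q => x5 x q p⟩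
  · rintro ⟨x1, x2, x3, x4, x5⟩; exact ⟨x3, x4, x1, x2, fun x p q => x5 x q p⟩

lemma Ei_mul_Ei_cancel (i : Fin n) (a b : Fin N) :
    (Ei i a b * Ei i b a : EndW N n) = Ei i a a := by
  ext k m
  rw [Ei_mul_apply]
  simp only [ei_apply, update_eq_update_iff_same]
  simp only [eq_update_iff'']
  simp only [← ite_and]
  congr 1
  rw [eq_iff_iff]
  tauto

lemma sum_Ei_mul_Ei {i j : Fin n} (hij : i ≠ j) (a : Fin N) :
    (∑ b, (Ei i a b * Ei j b a) : EndW N n) = Pflip i j * Ei j a a := by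
  ext k m
  rw [Matrix.sum_apply, Pflip_mul_apply]
  simp only [Ei_mul_Ei_apply hij, ei_apply, eq_update_iff'']
  have key : ∀ b : Fin N,
      (k i = a ∧ m i = b ∧ k j = b ∧ m j = a ∧ ∀ x, x ≠ i → x ≠ j → k x = m x)
      ↔ (b = m i ∧ (k i = a ∧ k j = m i ∧ m j = a ∧ ∀ x, x ≠ i → x ≠ j → k x = m x)) := by
    intro b
    constructor
    · rintro ⟨x1, rfl, x3, x4, x5⟩; exact ⟨rfl, x1, x3, x4, x5⟩
    · rintro ⟨rfl, x1, x3, x4, x5⟩; exact ⟨x1, rfl, x3, x4, x5⟩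
  simp only [key, ite_and]
  rw [Finset.sum_ite_eq', if_pos (Finset.mem_univ _)]
  simp only [← ite_and]
  congr 1
  rw [eq_iff_iff]
  constructor
  · rintro ⟨x1, x3, x4, x5⟩
    refine ⟨by simpa using x1, fun x hxj => ?_, x4⟩
    by_cases hxi : x = i
    · subst hxi
      simpa using x3
    · have hs : Equiv.swap i j x = x := Equiv.swap_apply_of_ne_of_ne hxi hxj
      simp only [Function.comp_apply, hs]
      exact x5 x hxi hxj
  · rintro ⟨y1, y2, x4⟩
    refine ⟨by simpa using y1, ?_, x4, fun x hxi hxj => ?_⟩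
    · have := y2 i hij
      simpa using this
    · have := y2 x hxj
      have hs : Equiv.swap i j x = x := Equiv.swap_apply_of_ne_of_ne hxi hxj
      simp only [Function.comp_apply, hs] at this
      exact this

/-! ### LamD lemmas -/

lemma LamD_mul_Ei_self (lam : Fin N → ℂ) (i : Fin n) (a b : Fin N) :
    (LamD lam i * Ei i a b : EndW N n) = lam a • Ei i a b := by
  ext k m
  rw [LamD_mul_apply, Matrix.smul_apply]
  simp only [ei_apply]
  by_cases h : k = Function.update m i a ∧ m i = b
  · rw [if_pos h]
    have : k i = a := by rw [h.1]; simp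
    rw [this]; simp
  · rw [if_neg h]; simp

lemma Ei_mul_LamD_self (lam : Fin N → ℂ) (i : Fin n) (a b : Fin N) :
    (Ei i a b * LamD lam i : EndW N n) = lam b • Ei i a b := by
  ext k m
  rw [mul_LamD_apply, Matrix.smul_apply]
  simp only [ei_apply]
  by_cases h : k = Function.update m i a ∧ m i = b
  · rw [if_pos h]
    simp [h.2, smul_eq_mul]
  · rw [if_neg h]; simp

lemma LamD_mul_Ei_comm (lam : Fin N → ℂ) {p i : Fin n} (hpi : p ≠ i) (a b : Fin N) :
    (LamD lam p * Ei i a b : EndW N n) = Ei i a b * LamD lam p := by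
  ext k m
  rw [LamD_mul_apply, mul_LamD_apply]
  simp only [ei_apply]
  by_cases h : k = Function.update m i a ∧ m i = b
  · rw [if_pos h]
    have : k p = m p := by rw [h.1, Function.update_of_ne hpi]
    rw [this]; ring
  · rw [if_neg h]; simp

lemma LamD_mul_Pflip_comm (lam : Fin N → ℂ) {p i j : Fin n} (hpi : p ≠ i) (hpj : p ≠ j) :
    (LamD lam p * Pflip i j : EndW N n) = Pflip i j * LamD lam p := by
  ext k m
  rw [LamD_mul_apply, Pflip_mul_apply, pflip_apply]
  have hD : (LamD lam p : EndW N n) (k ∘ ⇑(Equiv.swap i j)) m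
      = if k ∘ ⇑(Equiv.swap i j) = m then lam (m p) else 0 := by
    rw [LamD]
    by_cases h : k ∘ ⇑(Equiv.swap i j) = m
    · rw [if_pos h, h, Matrix.diagonal_apply_eq]
    · rw [if_neg h, Matrix.diagonal_apply_ne _ h]
  rw [hD]
  by_cases h : k = m ∘ ⇑(Equiv.swap i j)
  · rw [if_pos h, if_pos (comp_swap_eq_iff.mp h)]
    have : k p = m p := by
      rw [h]
      simp only [Function.comp_apply, Equiv.swap_apply_of_ne_of_ne hpi hpj]
    rw [this, mul_one]
  · rw [if_neg h, if_neg (fun hc => h (comp_swap_eq_iff.mpr hc))]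
    simp

end QKZ
namespace QKZ
open Function Equiv Finset Matrix
variable {N n : ℕ}

lemma Pflip_Ei_left (i j : Fin n) (a b : Fin N) :
    (Pflip i j * Ei i a b : EndW N n) = Ei j a b * Pflip i j := by
  rw [Pflip_mul_Ei, Equiv.swap_apply_left]

lemma Pflip_Ei_right (i j : Fin n) (a b : Fin N) :
    (Pflip i j * Ei j a b : EndW N n) = Ei i a b * Pflip i j := by
  rw [Pflip_mul_Ei, Equiv.swap_apply_right]

lemma Pflip_Ei_other {i j p : Fin n} (hpi : p ≠ i) (hpj : p ≠ j) (a b : Fin N) :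
    (Pflip i j * Ei p a b : EndW N n) = Ei p a b * Pflip i j := by
  rw [Pflip_mul_Ei, Equiv.swap_apply_of_ne_of_ne hpi hpj]

lemma Pflip_mul_Etot (i j : Fin n) (c d : Fin N) :
    (Pflip i j * Etot c d : EndW N n) = Etot c d * Pflip i j := by
  rw [Etot, Finset.mul_sum, Finset.sum_mul]
  rw [show (∑ p, (Pflip i j * Ei p c d : EndW N n))
      = ∑ p, (Ei (Equiv.swap i j p) c d * Pflip i j) from
    Finset.sum_congr rfl fun p _ => Pflip_mul_Ei i j p c d]
  exact Equiv.sum_comp (Equiv.swap i j) (fun p => (Ei p c d * Pflip i j : EndW N n))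

lemma commute_Etot_Rm (c d : Fin N) (x : ℂ) (i j : Fin n) :
    Commute (Etot c d : EndW N n) (Rm x i j) := by
  rw [Rm]
  refine Commute.smul_right ?_ _
  refine Commute.add_right ?_ ?_
  · exact Commute.smul_right (Commute.one_right _) _
  · exact (Pflip_mul_Etot i j c d).symm

lemma commute_Etot_Kright (z : Fin n → ℂ) (m : Fin n) (c d : Fin N) :
    Commute (Etot c d : EndW N n) (Kright z m) := by
  rw [Kright]
  refine Commute.list_prod_right _ _ ?_
  intro y hy
  rw [List.mem_map] at hy
  obtain ⟨j, -, rfl⟩ := hy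
  exact commute_Etot_Rm c d _ m j

lemma commute_Etot_LamD (lam : Fin N → ℂ) (i0 : Fin n) (a : Fin N) :
    Commute (Etot a a : EndW N n) (LamD lam i0) := by
  rw [Etot]
  refine Commute.sum_left _ _ _ fun i _ => ?_
  by_cases hi : i = i0
  · subst hi
    show _ = _
    rw [Ei_mul_LamD_self, LamD_mul_Ei_self]
  · exact (LamD_mul_Ei_comm lam (Ne.symm hi) a a).symm

lemma LamD_comm_Etot (lam : Fin N → ℂ) (i0 : Fin n) (a b : Fin N) :
    LamD lam i0 * Etot a b - Etot a b * LamD lam i0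
      = (lam a - lam b) • (Ei i0 a b : EndW N n) := by
  rw [Etot, Finset.mul_sum, Finset.sum_mul, ← Finset.sum_sub_distrib]
  rw [show (∑ i, (LamD lam i0 * Ei i a b - Ei i a b * LamD lam i0) : EndW N n)
      = ∑ i, if i = i0 then (lam a - lam b) • (Ei i0 a b : EndW N n) else 0 from
    Finset.sum_congr rfl fun i _ => by
      by_cases hi : i = i0
      · subst hi
        rw [if_pos rfl, LamD_mul_Ei_self, Ei_mul_LamD_self, sub_smul]
      · rw [if_neg hi, LamD_mul_Ei_comm lam (Ne.symm hi), sub_self]]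
  rw [Finset.sum_ite_eq', if_pos (Finset.mem_univ _)]

end QKZ
namespace QKZ
open Function Equiv Finset Matrix
variable {N n : ℕ}

def Zop (z : Fin n → ℂ) (a : Fin N) : EndW N n := ∑ i, z i • Ei i a a

def Aop (a : Fin N) (i0 : Fin n) (c : Fin n → Prop) [DecidablePred c] : EndW N n :=
  ∑ j ∈ Finset.univ.erase i0, Pflip i0 j * Ei (if c j then i0 else j) a a

def Cop (a : Fin N) (i0 : Fin n) : EndW N n :=
  ∑ i ∈ Finset.univ.erase i0, ∑ j, if i < j then Pflip i j * Ei j a a else 0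

def Hop (z : Fin n → ℂ) (a : Fin N) (i0 : Fin n) (c : Fin n → Prop) [DecidablePred c] :
    EndW N n := Zop z a + Aop a i0 c + Cop a i0

variable {i0 t : Fin n}

lemma stepZ (z : Fin n → ℂ) (a : Fin N) (hti : t ≠ i0) :
    (Pflip i0 t * Zop z a : EndW N n)
      = Zop z a * Pflip i0 t + (z i0 - z t) • (Ei t a a * Pflip i0 t)
        - (z i0 - z t) • (Ei i0 a a * Pflip i0 t) := by
  have hswap : ∀ i : Fin n, Equiv.swap i0 t (Equiv.swap i0 t i) = i := fun i =>
    Equiv.swap_apply_self _ _ _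
  rw [Zop, Finset.mul_sum, Finset.sum_mul]
  have h1 : ∀ i : Fin n, (Pflip i0 t * (z i • Ei i a a) : EndW N n)
      = z i • (Ei (Equiv.swap i0 t i) a a * Pflip i0 t) := fun i => by
    rw [mul_smul_comm, Pflip_mul_Ei]
  simp only [h1, smul_mul_assoc]
  have h2 : (∑ i, z i • (Ei (Equiv.swap i0 t i) a a * Pflip i0 t) : EndW N n)
      = ∑ i, z (Equiv.swap i0 t i) • (Ei i a a * Pflip i0 t) := by
    have := Equiv.sum_comp (Equiv.swap i0 t)
      (fun i => (z (Equiv.swap i0 t i) • (Ei i a a * Pflip i0 t) : EndW N n))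
    rw [← this]
    refine Finset.sum_congr rfl fun i _ => ?_
    rw [hswap]
  rw [h2]
  set v : Fin n → EndW N n := fun i => Ei i a a * Pflip i0 t with hv
  have htmem : t ∈ Finset.univ.erase i0 := Finset.mem_erase.mpr ⟨hti, Finset.mem_univ t⟩
  have split : ∀ w : Fin n → ℂ, (∑ i, w i • v i : EndW N n)
      = w i0 • v i0 + (w t • v t + ∑ i ∈ (Finset.univ.erase i0).erase t, w i • v i) := by
    intro w
    rw [← Finset.add_sum_erase _ _ (Finset.mem_univ i0), ← Finset.add_sum_erase _ _ htmem]
  rw [split (fun i => z (Equiv.swap i0 t i)), split z]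
  have h3 : ∑ i ∈ (Finset.univ.erase i0).erase t, z (Equiv.swap i0 t i) • v i
      = ∑ i ∈ (Finset.univ.erase i0).erase t, z i • v i := by
    refine Finset.sum_congr rfl fun i hi => ?_
    rw [Finset.mem_erase, Finset.mem_erase] at hi
    rw [Equiv.swap_apply_of_ne_of_ne hi.2.1 hi.1]
  rw [h3, Equiv.swap_apply_left, Equiv.swap_apply_right, sub_smul, sub_smul]
  abel

lemma filt1 : ((Finset.univ.erase i0).erase t).filter (fun j => j < t)
    = (Finset.univ.erase i0).filter (fun j => j < t) := by
  ext j
  simp only [Finset.mem_filter, Finset.mem_erase, Finset.mem_univ, and_true]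
  constructor
  · rintro ⟨⟨-, h2⟩, h3⟩; exact ⟨h2, h3⟩
  · rintro ⟨h2, h3⟩; exact ⟨⟨ne_of_lt h3, h2⟩, h3⟩

lemma filt2 (hi0 : ∀ j, j ≠ i0 → i0 < j) (hti : t ≠ i0) :
    ((Finset.univ.erase i0).erase t).filter (fun j => ¬ j < t)
    = Finset.univ.filter (fun j => t < j) := by
  ext j
  simp only [Finset.mem_filter, Finset.mem_erase, Finset.mem_univ, and_true, true_and]
  constructor
  · rintro ⟨⟨h1, h2⟩, h3⟩
    rcases lt_trichotomy j t with h | h | h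
    · exact absurd h h3
    · exact absurd h h1
    · exact h
  · intro h
    have hji : j ≠ i0 := by
      intro hc
      subst hc
      exact absurd (lt_trans (hi0 t hti) h) (lt_irrefl _)
    exact ⟨⟨ne_of_gt h, hji⟩, not_lt_of_gt h⟩

lemma decompA (a : Fin N) (hi0 : ∀ j, j ≠ i0 → i0 < j) (hti : t ≠ i0)
    (c : Fin n → Prop) [DecidablePred c]
    (hc : ∀ j, j ≠ i0 → j ≠ t → ((j < t → c j) ∧ (t < j → ¬ c j))) :
    (Aop a i0 c : EndW N n)
      = Pflip i0 t * Ei (if c t then i0 else t) a a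
        + ((∑ j ∈ (Finset.univ.erase i0).filter (fun j => j < t),
              Pflip i0 j * Ei i0 a a)
          + ∑ j ∈ Finset.univ.filter (fun j => t < j), Pflip i0 j * Ei j a a) := by
  have htmem : t ∈ Finset.univ.erase i0 := Finset.mem_erase.mpr ⟨hti, Finset.mem_univ t⟩
  rw [Aop, ← Finset.add_sum_erase _ _ htmem]
  congr 1
  rw [← Finset.sum_filter_add_sum_filter_not (((Finset.univ.erase i0).erase t)) (fun j => j < t),
    filt1, filt2 hi0 hti]
  congr 1
  · refine Finset.sum_congr rfl fun j hj => ?_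
    rw [Finset.mem_filter, Finset.mem_erase] at hj
    rw [if_pos ((hc j hj.1.1 (ne_of_lt hj.2)).1 hj.2)]
  · refine Finset.sum_congr rfl fun j hj => ?_
    rw [Finset.mem_filter] at hj
    have hji : j ≠ i0 := by
      intro hc'
      subst hc'
      exact absurd (lt_trans (hi0 t hti) hj.2) (lt_irrefl _)
    rw [if_neg ((hc j hji (ne_of_gt hj.2)).2 hj.2)]

lemma decompC (a : Fin N) (hi0 : ∀ j, j ≠ i0 → i0 < j) (hti : t ≠ i0) :
    (Cop a i0 : EndW N n)
      = ((∑ j ∈ (Finset.univ.erase i0).filter (fun j => j < t),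
            Pflip j t * Ei t a a)
          + ∑ j ∈ Finset.univ.filter (fun j => t < j), Pflip t j * Ei j a a)
        + ∑ i ∈ (Finset.univ.erase i0).erase t, ∑ j ∈ Finset.univ.erase t,
            (if i < j then Pflip i j * Ei j a a else 0) := by
  have htmem : t ∈ Finset.univ.erase i0 := Finset.mem_erase.mpr ⟨hti, Finset.mem_univ t⟩
  rw [Cop, ← Finset.add_sum_erase _ _ htmem]
  have hgt : (∑ j, if t < j then (Pflip t j * Ei j a a : EndW N n) else 0)
      = ∑ j ∈ Finset.univ.filter (fun j => t < j), Pflip t j * Ei j a a := by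
    rw [Finset.sum_filter]
  have hrest : (∑ i ∈ (Finset.univ.erase i0).erase t,
        ∑ j, (if i < j then (Pflip i j * Ei j a a : EndW N n) else 0))
      = (∑ j ∈ (Finset.univ.erase i0).filter (fun j => j < t), Pflip j t * Ei t a a)
        + ∑ i ∈ (Finset.univ.erase i0).erase t, ∑ j ∈ Finset.univ.erase t,
            (if i < j then Pflip i j * Ei j a a else 0) := by
    have hsplit : ∀ i : Fin n, (∑ j, (if i < j then (Pflip i j * Ei j a a : EndW N n) else 0))
        = (if i < t then Pflip i t * Ei t a a else 0)
          + ∑ j ∈ Finset.univ.erase t, (if i < j then Pflip i j * Ei j a a else 0) := by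
      intro i
      rw [← Finset.add_sum_erase _ _ (Finset.mem_univ t)]
    simp only [hsplit]
    rw [Finset.sum_add_distrib]
    congr 1
    rw [← Finset.sum_filter, filt1]
  rw [hgt, hrest]
  abel

lemma stepE1 (a : Fin N) :
    (Pflip i0 t * (Pflip i0 t * Ei t a a) : EndW N n)
      = (Pflip i0 t * Ei i0 a a) * Pflip i0 t := by
  rw [← mul_assoc, Pflip_mul_self, one_mul, Pflip_Ei_left, mul_assoc, Pflip_mul_self, mul_one]

lemma stepE2a (a : Fin N) {j : Fin n} (h0t : i0 ≠ t) (h0j : i0 ≠ j) (hjt : j ≠ t) :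
    (Pflip i0 t * (Pflip i0 j * Ei i0 a a) : EndW N n)
      = (Pflip j t * Ei t a a) * Pflip i0 t := by
  have b1 : (Pflip i0 t * Pflip i0 j : EndW N n) = Pflip t j * Pflip i0 t :=
    braid i0 t j h0t h0j (fun h => hjt h.symm)
  calc (Pflip i0 t * (Pflip i0 j * Ei i0 a a) : EndW N n)
      = (Pflip i0 t * Pflip i0 j) * Ei i0 a a := (mul_assoc _ _ _).symm
    _ = (Pflip t j * Pflip i0 t) * Ei i0 a a := by rw [b1]
    _ = Pflip t j * (Pflip i0 t * Ei i0 a a) := mul_assoc _ _ _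
    _ = Pflip t j * (Ei t a a * Pflip i0 t) := by rw [Pflip_Ei_left]
    _ = (Pflip t j * Ei t a a) * Pflip i0 t := (mul_assoc _ _ _).symm
    _ = (Pflip j t * Ei t a a) * Pflip i0 t := by rw [Pflip_comm t j]

lemma stepE2b (a : Fin N) {j : Fin n} (h0t : i0 ≠ t) (h0j : i0 ≠ j) (hjt : j ≠ t) :
    (Pflip i0 t * (Pflip j t * Ei t a a) : EndW N n)
      = (Pflip i0 j * Ei i0 a a) * Pflip i0 t := by
  have b2 : (Pflip t i0 * Pflip t j : EndW N n) = Pflip i0 j * Pflip t i0 :=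
    braid t i0 j (Ne.symm h0t) (Ne.symm hjt) h0j
  have key : (Pflip i0 t * Pflip j t : EndW N n) = Pflip i0 j * Pflip i0 t := by
    calc (Pflip i0 t * Pflip j t : EndW N n)
        = Pflip t i0 * Pflip t j := by rw [Pflip_comm i0 t, Pflip_comm j t]
      _ = Pflip i0 j * Pflip t i0 := b2
      _ = Pflip i0 j * Pflip i0 t := by rw [Pflip_comm t i0]
  calc (Pflip i0 t * (Pflip j t * Ei t a a) : EndW N n)
      = (Pflip i0 t * Pflip j t) * Ei t a a := (mul_assoc _ _ _).symm
    _ = (Pflip i0 j * Pflip i0 t) * Ei t a a := by rw [key]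
    _ = Pflip i0 j * (Pflip i0 t * Ei t a a) := mul_assoc _ _ _
    _ = Pflip i0 j * (Ei i0 a a * Pflip i0 t) := by rw [Pflip_Ei_right]
    _ = (Pflip i0 j * Ei i0 a a) * Pflip i0 t := (mul_assoc _ _ _).symm

lemma stepE3a (a : Fin N) {j : Fin n} (h0t : i0 ≠ t) (h0j : i0 ≠ j) (hjt : j ≠ t) :
    (Pflip i0 t * (Pflip i0 j * Ei j a a) : EndW N n)
      = (Pflip t j * Ei j a a) * Pflip i0 t := by
  have b1 : (Pflip i0 t * Pflip i0 j : EndW N n) = Pflip t j * Pflip i0 t :=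
    braid i0 t j h0t h0j (fun h => hjt h.symm)
  have hcomm : (Pflip i0 t * Ei j a a : EndW N n) = Ei j a a * Pflip i0 t :=
    Pflip_Ei_other (Ne.symm h0j) hjt a a
  calc (Pflip i0 t * (Pflip i0 j * Ei j a a) : EndW N n)
      = (Pflip i0 t * Pflip i0 j) * Ei j a a := (mul_assoc _ _ _).symm
    _ = (Pflip t j * Pflip i0 t) * Ei j a a := by rw [b1]
    _ = Pflip t j * (Pflip i0 t * Ei j a a) := mul_assoc _ _ _
    _ = Pflip t j * (Ei j a a * Pflip i0 t) := by rw [hcomm]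
    _ = (Pflip t j * Ei j a a) * Pflip i0 t := (mul_assoc _ _ _).symm

lemma stepE3b (a : Fin N) {j : Fin n} (h0t : i0 ≠ t) (h0j : i0 ≠ j) (hjt : j ≠ t) :
    (Pflip i0 t * (Pflip t j * Ei j a a) : EndW N n)
      = (Pflip i0 j * Ei j a a) * Pflip i0 t := by
  have b2 : (Pflip t i0 * Pflip t j : EndW N n) = Pflip i0 j * Pflip t i0 :=
    braid t i0 j (Ne.symm h0t) (Ne.symm hjt) h0j
  have hcomm : (Pflip i0 t * Ei j a a : EndW N n) = Ei j a a * Pflip i0 t :=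
    Pflip_Ei_other (Ne.symm h0j) hjt a a
  have key : (Pflip i0 t * Pflip t j : EndW N n) = Pflip i0 j * Pflip i0 t := by
    calc (Pflip i0 t * Pflip t j : EndW N n)
        = Pflip t i0 * Pflip t j := by rw [Pflip_comm i0 t]
      _ = Pflip i0 j * Pflip t i0 := b2
      _ = Pflip i0 j * Pflip i0 t := by rw [Pflip_comm t i0]
  calc (Pflip i0 t * (Pflip t j * Ei j a a) : EndW N n)
      = (Pflip i0 t * Pflip t j) * Ei j a a := (mul_assoc _ _ _).symm
    _ = (Pflip i0 j * Pflip i0 t) * Ei j a a := by rw [key]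
    _ = Pflip i0 j * (Pflip i0 t * Ei j a a) := mul_assoc _ _ _
    _ = Pflip i0 j * (Ei j a a * Pflip i0 t) := by rw [hcomm]
    _ = (Pflip i0 j * Ei j a a) * Pflip i0 t := (mul_assoc _ _ _).symm

lemma stepE4 (a : Fin N) (hi0 : ∀ j, j ≠ i0 → i0 < j) (hti : t ≠ i0) :
    (Pflip i0 t * (∑ i ∈ (Finset.univ.erase i0).erase t, ∑ j ∈ Finset.univ.erase t,
        (if i < j then Pflip i j * Ei j a a else 0)) : EndW N n)
      = (∑ i ∈ (Finset.univ.erase i0).erase t, ∑ j ∈ Finset.univ.erase t,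
          (if i < j then Pflip i j * Ei j a a else 0)) * Pflip i0 t := by
  rw [Finset.mul_sum, Finset.sum_mul]
  refine Finset.sum_congr rfl fun i hi => ?_
  rw [Finset.mul_sum, Finset.sum_mul]
  refine Finset.sum_congr rfl fun j hj => ?_
  rw [Finset.mem_erase, Finset.mem_erase] at hi
  rw [Finset.mem_erase] at hj
  by_cases hij : i < j
  · rw [if_pos hij]
    have hji0 : j ≠ i0 := by
      intro hc
      subst hc
      exact absurd (lt_trans (hi0 i hi.2.1) hij) (lt_irrefl _)
    have hd : (Pflip i0 t * Pflip i j : EndW N n) = Pflip i j * Pflip i0 t :=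
      Pflip_mul_Pflip_disj (Ne.symm hi.2.1) (Ne.symm hji0) (Ne.symm hi.1) (Ne.symm hj.1)
    have hE : (Pflip i0 t * Ei j a a : EndW N n) = Ei j a a * Pflip i0 t :=
      Pflip_Ei_other hji0 hj.1 a a
    rw [← mul_assoc, hd, mul_assoc, hE, ← mul_assoc]
  · rw [if_neg hij, mul_zero, zero_mul]

end QKZ
namespace QKZ
open Function Equiv Finset Matrix
variable {N n : ℕ} {i0 t : Fin n}

/-- Abstract assembly lemma for the step computation. -/
lemma assemble (x : ℂ) (P Z E0P EtP U V SA1 SA2 SC1 SC2 CR : EndW N n)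
    (hZ : P * Z = Z * P + x • EtP - x • E0P)
    (hU : P * U = V * P)
    (hUeq : U = E0P) (hVeq : V = EtP)
    (h1 : P * SA1 = SC1 * P) (h2 : P * SC1 = SA1 * P)
    (h3 : P * SA2 = SC2 * P) (h4 : P * SC2 = SA2 * P)
    (h5 : P * CR = CR * P) :
    (x • (1 : EndW N n) + P) * (Z + (U + (SA1 + SA2)) + ((SC1 + SC2) + CR))
      = (Z + (V + (SA1 + SA2)) + ((SC1 + SC2) + CR)) * (x • (1 : EndW N n) + P) := by
  subst hUeq hVeq
  simp only [add_mul, mul_add, smul_mul_assoc, one_mul, mul_smul_comm, mul_one, smul_add,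
    hZ, hU, h1, h2, h3, h4, h5]
  abel

lemma stepCore (z : Fin n → ℂ) (a : Fin N)
    (hi0 : ∀ j, j ≠ i0 → i0 < j) (hti : t ≠ i0) :
    ((z i0 - z t) • (1 : EndW N n) + Pflip i0 t) * Hop z a i0 (fun j => j < t)
      = Hop z a i0 (fun j => j ≤ t) * ((z i0 - z t) • (1 : EndW N n) + Pflip i0 t) := by
  have h0t : i0 ≠ t := Ne.symm hti
  have hi0t : i0 < t := hi0 t hti
  have hAlt : (Aop a i0 (fun j => j < t) : EndW N n)
      = Pflip i0 t * Ei t a a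
        + ((∑ j ∈ (Finset.univ.erase i0).filter (fun j => j < t), Pflip i0 j * Ei i0 a a)
          + ∑ j ∈ Finset.univ.filter (fun j => t < j), Pflip i0 j * Ei j a a) := by
    rw [decompA a hi0 hti _ (fun j hj1 hj2 => ⟨fun h => h, fun h => not_lt_of_gt h⟩)]
    rw [if_neg (lt_irrefl t)]
  have hAle : (Aop a i0 (fun j => j ≤ t) : EndW N n)
      = Pflip i0 t * Ei i0 a a
        + ((∑ j ∈ (Finset.univ.erase i0).filter (fun j => j < t), Pflip i0 j * Ei i0 a a)
          + ∑ j ∈ Finset.univ.filter (fun j => t < j), Pflip i0 j * Ei j a a) := by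
    rw [decompA a hi0 hti _ (fun j hj1 hj2 => ⟨fun h => le_of_lt h, fun h => not_le_of_gt h⟩)]
    rw [if_pos (le_refl t)]
  have hC := decompC (i0 := i0) (t := t) a hi0 hti
  rw [Hop, Hop, hAlt, hAle, hC]
  refine assemble (z i0 - z t) (Pflip i0 t) (Zop z a)
    (Ei i0 a a * Pflip i0 t) (Ei t a a * Pflip i0 t)
    (Pflip i0 t * Ei t a a) (Pflip i0 t * Ei i0 a a) _ _ _ _ _
    (stepZ z a hti) (stepE1 a) (Pflip_Ei_right i0 t a a) (Pflip_Ei_left i0 t a a)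
    ?_ ?_ ?_ ?_ (stepE4 a hi0 hti)
  · rw [Finset.mul_sum, Finset.sum_mul]
    refine Finset.sum_congr rfl fun j hj => ?_
    rw [Finset.mem_filter, Finset.mem_erase] at hj
    exact stepE2a a h0t (Ne.symm hj.1.1) (ne_of_lt hj.2)
  · rw [Finset.mul_sum, Finset.sum_mul]
    refine Finset.sum_congr rfl fun j hj => ?_
    rw [Finset.mem_filter, Finset.mem_erase] at hj
    exact stepE2b a h0t (Ne.symm hj.1.1) (ne_of_lt hj.2)
  · rw [Finset.mul_sum, Finset.sum_mul]
    refine Finset.sum_congr rfl fun j hj => ?_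
    rw [Finset.mem_filter] at hj
    have h0j : i0 ≠ j := ne_of_lt (lt_trans hi0t hj.2)
    exact stepE3a a h0t h0j (ne_of_gt hj.2)
  · rw [Finset.mul_sum, Finset.sum_mul]
    refine Finset.sum_congr rfl fun j hj => ?_
    rw [Finset.mem_filter] at hj
    have h0j : i0 ≠ j := ne_of_lt (lt_trans hi0t hj.2)
    exact stepE3b a h0t h0j (ne_of_gt hj.2)

lemma step (z : Fin n → ℂ) (a : Fin N)
    (hi0 : ∀ j, j ≠ i0 → i0 < j) (hti : t ≠ i0) :
    Rm (z i0 - z t) i0 t * Hop z a i0 (fun j => j < t)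
      = Hop z a i0 (fun j => j ≤ t) * Rm (z i0 - z t) i0 t := by
  rw [Rm, smul_mul_assoc, mul_smul_comm, stepCore z a hi0 hti]

end QKZ
namespace QKZ
open Function Equiv Finset Matrix
variable {N n : ℕ} {i0 : Fin n}

lemma Hop_congr (z : Fin n → ℂ) (a : Fin N) (c c' : Fin n → Prop)
    [DecidablePred c] [DecidablePred c']
    (h : ∀ j, j ≠ i0 → (c j ↔ c' j)) :
    (Hop z a i0 c : EndW N n) = Hop z a i0 c' := by
  rw [Hop, Hop]
  congr 1
  congr 1
  rw [Aop, Aop]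
  refine Finset.sum_congr rfl fun j hj => ?_
  rw [Finset.mem_erase] at hj
  congr 1
  rw [if_congr (h j hj.1) rfl rfl]

lemma listMain (z : Fin n → ℂ) (a : Fin N) (hi0 : ∀ j, j ≠ i0 → i0 < j) :
    ∀ l : List (Fin n), l.Pairwise (· > ·) → (∀ j ∈ l, j ≠ i0) →
      (∀ j, j ≠ i0 → j ∉ l → ∀ s ∈ l, s < j) →
      ((l.map fun j => Rm (z i0 - z j) i0 j).prod : EndW N n)
          * Hop z a i0 (fun _ => False)
        = Hop z a i0 (fun j => j ∈ l) * (l.map fun j => Rm (z i0 - z j) i0 j).prod := by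
  intro l
  induction l with
  | nil =>
    intro _ _ _
    simp only [List.map_nil, List.prod_nil, one_mul, mul_one]
    refine Hop_congr z a _ _ fun j hj => ?_
    simp
  | cons t l ih =>
    intro hpw hne h3
    rw [List.pairwise_cons] at hpw
    have hgt : ∀ s ∈ l, s < t := hpw.1
    have hti : t ≠ i0 := hne t List.mem_cons_self
    have hmemlt : ∀ j, j ≠ i0 → (j ∈ l ↔ j < t) := by
      intro j hj
      constructor
      · exact fun hl => hgt j hl
      · intro hlt
        by_contra hnl
        by_cases hjt : j = t
        · subst hjt; exact absurd hlt (lt_irrefl _)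
        · have : j ∉ t :: l := by
            simp only [List.mem_cons, not_or]
            exact ⟨hjt, hnl⟩
          have := h3 j hj this t List.mem_cons_self
          exact absurd (lt_trans this hlt) (lt_irrefl _)
    have hmemle : ∀ j, j ≠ i0 → (j ∈ t :: l ↔ j ≤ t) := by
      intro j hj
      rw [List.mem_cons]
      constructor
      · rintro (rfl | hl)
        · exact le_refl _
        · exact le_of_lt (hgt j hl)
      · intro hle
        rcases eq_or_lt_of_le hle with h | h
        · exact Or.inl h
        · exact Or.inr ((hmemlt j hj).mpr h)
    have h3' : ∀ j, j ≠ i0 → j ∉ l → ∀ s ∈ l, s < j := by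
      intro j hj hnl s hs
      by_cases hjt : j = t
      · subst hjt; exact hgt s hs
      · refine h3 j hj ?_ s (List.mem_cons_of_mem t hs)
        simp only [List.mem_cons, not_or]
        exact ⟨hjt, hnl⟩
    have ihh := ih hpw.2 (fun j hj => hne j (List.mem_cons_of_mem t hj)) h3'
    rw [List.map_cons, List.prod_cons, mul_assoc, ihh,
      Hop_congr z a _ _ hmemlt, ← mul_assoc, step z a hi0 hti,
      Hop_congr z a (fun j => j ≤ t) _ (fun j hj => (hmemle j hj).symm), mul_assoc]

end QKZ
namespace QKZ
open Function Equiv Finset Matrix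
variable {N n : ℕ} {i0 : Fin n}

lemma filter_lt_eq_erase (hi0 : ∀ j, j ≠ i0 → i0 < j) :
    (Finset.univ.filter (fun j => i0 < j) : Finset (Fin n)) = Finset.univ.erase i0 := by
  ext j
  simp only [Finset.mem_filter, Finset.mem_univ, true_and, Finset.mem_erase, and_true]
  constructor
  · exact fun h => Ne.symm (ne_of_lt h)
  · exact fun h => hi0 j h

lemma Kright_swap (z : Fin n → ℂ) (a : Fin N) (hi0 : ∀ j, j ≠ i0 → i0 < j) :
    (Kright z i0 : EndW N n) * Hop z a i0 (fun _ => False)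
      = Hop z a i0 (fun _ => True) * Kright z i0 := by
  rw [Kright]
  set l : List (Fin n) := ((List.finRange n).filter (fun j => i0 < j)).reverse with hl
  have hmem : ∀ j : Fin n, j ∈ l ↔ i0 < j := by
    intro j
    rw [hl, List.mem_reverse, List.mem_filter]
    simp [List.mem_finRange]
  have hpw : l.Pairwise (· > ·) := by
    rw [hl, List.pairwise_reverse]
    exact List.Pairwise.filter _ (List.pairwise_lt_finRange n)
  have hne : ∀ j ∈ l, j ≠ i0 := fun j hj => Ne.symm (ne_of_lt ((hmem j).mp hj))
  have h3 : ∀ j, j ≠ i0 → j ∉ l → ∀ s ∈ l, s < j := by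
    intro j hj hnl
    exact absurd ((hmem j).mpr (hi0 j hj)) hnl
  have := listMain z a hi0 l hpw hne h3
  rw [this, Hop_congr z a (fun j => j ∈ l) (fun _ => True)
    (fun j hj => by simp [hmem j, hi0 j hj])]

lemma Ct_eq (z : Fin n → ℂ) (a : Fin N) (hi0 : ∀ j, j ≠ i0 → i0 < j) :
    (∑ b : Fin N, ∑ i : Fin n, ∑ j : Fin n,
        (if i < j then (Ei i a b * Ei j b a : EndW N n) else 0))
      = Aop a i0 (fun _ => False) + Cop a i0 := by
  rw [Finset.sum_comm]
  have h1 : ∀ i : Fin n, (∑ b : Fin N, ∑ j : Fin n,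
      (if i < j then (Ei i a b * Ei j b a : EndW N n) else 0))
      = ∑ j : Fin n, (if i < j then (Pflip i j * Ei j a a : EndW N n) else 0) := by
    intro i
    rw [Finset.sum_comm]
    refine Finset.sum_congr rfl fun j _ => ?_
    by_cases hij : i < j
    · simp only [if_pos hij]
      exact sum_Ei_mul_Ei (ne_of_lt hij) a
    · simp only [if_neg hij, Finset.sum_const_zero]
  simp only [h1]
  rw [← Finset.add_sum_erase _ _ (Finset.mem_univ i0)]
  congr 1
  · rw [← Finset.sum_filter, filter_lt_eq_erase hi0, Aop]
    refine Finset.sum_congr rfl fun j _ => ?_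
    simp

def Dop (lam : Fin N → ℂ) (a : Fin N) : EndW N n :=
  ∑ b ∈ Finset.univ.erase a, (lam b / (lam a - lam b)) • (Etot a b * Etot b a - Etot a a)

lemma Ldyn_eq (z : Fin n → ℂ) (lam : Fin N → ℂ) (a : Fin N)
    (hi0 : ∀ j, j ≠ i0 → i0 < j) :
    Ldyn z lam a = (2⁻¹ : ℂ) • (Etot a a : EndW N n) ^ 2
      - Hop z a i0 (fun _ => False) - Dop lam a := by
  rw [Ldyn, Ct_eq z a hi0, Hop, Dop, Zop]
  abel

end QKZ
namespace QKZ
open Function Equiv Finset Matrix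
variable {N n : ℕ} {i0 : Fin n}

lemma LamD_Zop_comm (z : Fin n → ℂ) (lam : Fin N → ℂ) (a : Fin N) :
    (LamD lam i0 * Zop z a : EndW N n) = Zop z a * LamD lam i0 := by
  rw [Zop, Finset.mul_sum, Finset.sum_mul]
  refine Finset.sum_congr rfl fun i _ => ?_
  rw [mul_smul_comm, smul_mul_assoc]
  congr 1
  by_cases hi : i = i0
  · subst hi; rw [LamD_mul_Ei_self, Ei_mul_LamD_self]
  · exact LamD_mul_Ei_comm lam (Ne.symm hi) a a

lemma LamD_Cop_comm (lam : Fin N → ℂ) (a : Fin N) (hi0 : ∀ j, j ≠ i0 → i0 < j) :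
    (LamD lam i0 * Cop a i0 : EndW N n) = Cop a i0 * LamD lam i0 := by
  rw [Cop, Finset.mul_sum, Finset.sum_mul]
  refine Finset.sum_congr rfl fun i hi => ?_
  rw [Finset.mem_erase] at hi
  rw [Finset.mul_sum, Finset.sum_mul]
  refine Finset.sum_congr rfl fun j _ => ?_
  by_cases hij : i < j
  · rw [if_pos hij]
    have hj0 : j ≠ i0 := Ne.symm (ne_of_lt (lt_trans (hi0 i hi.1) hij))
    calc (LamD lam i0 * (Pflip i j * Ei j a a) : EndW N n)
        = (LamD lam i0 * Pflip i j) * Ei j a a := (mul_assoc _ _ _).symm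
      _ = (Pflip i j * LamD lam i0) * Ei j a a := by
          rw [LamD_mul_Pflip_comm lam (Ne.symm hi.1) (Ne.symm hj0)]
      _ = Pflip i j * (LamD lam i0 * Ei j a a) := mul_assoc _ _ _
      _ = Pflip i j * (Ei j a a * LamD lam i0) := by
          rw [LamD_mul_Ei_comm lam (Ne.symm hj0)]
      _ = (Pflip i j * Ei j a a) * LamD lam i0 := (mul_assoc _ _ _).symm
  · rw [if_neg hij, mul_zero, zero_mul]

lemma Aop_true_eq (a : Fin N) :
    (Aop a i0 (fun _ => True) : EndW N n)
      = ∑ j ∈ Finset.univ.erase i0, ∑ b : Fin N, Ei j a b * Ei i0 b a := by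
  rw [Aop]
  refine Finset.sum_congr rfl fun j hj => ?_
  rw [Finset.mem_erase] at hj
  rw [if_pos trivial, ← Pflip_comm, ← sum_Ei_mul_Ei hj.1 a]

lemma Aop_false_eq (a : Fin N) :
    (Aop a i0 (fun _ => False) : EndW N n)
      = ∑ j ∈ Finset.univ.erase i0, ∑ b : Fin N, Ei i0 a b * Ei j b a := by
  rw [Aop]
  refine Finset.sum_congr rfl fun j hj => ?_
  rw [Finset.mem_erase] at hj
  rw [if_neg (fun h => h), ← sum_Ei_mul_Ei (Ne.symm hj.1) a]

lemma cA (lam : Fin N → ℂ) (a : Fin N) :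
    (LamD lam i0 * Aop a i0 (fun _ => True) : EndW N n)
      = ∑ j ∈ Finset.univ.erase i0, ∑ b : Fin N, lam b • (Ei j a b * Ei i0 b a) := by
  rw [Aop_true_eq, Finset.mul_sum]
  refine Finset.sum_congr rfl fun j hj => ?_
  rw [Finset.mem_erase] at hj
  rw [Finset.mul_sum]
  refine Finset.sum_congr rfl fun b _ => ?_
  calc (LamD lam i0 * (Ei j a b * Ei i0 b a) : EndW N n)
      = (LamD lam i0 * Ei j a b) * Ei i0 b a := (mul_assoc _ _ _).symm
    _ = (Ei j a b * LamD lam i0) * Ei i0 b a := by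
        rw [LamD_mul_Ei_comm lam (Ne.symm hj.1)]
    _ = Ei j a b * (LamD lam i0 * Ei i0 b a) := mul_assoc _ _ _
    _ = Ei j a b * (lam b • Ei i0 b a) := by rw [LamD_mul_Ei_self]
    _ = lam b • (Ei j a b * Ei i0 b a) := mul_smul_comm _ _ _

lemma cB (lam : Fin N → ℂ) (a : Fin N) :
    (Aop a i0 (fun _ => False) * LamD lam i0 : EndW N n)
      = ∑ j ∈ Finset.univ.erase i0, ∑ b : Fin N, lam b • (Ei i0 a b * Ei j b a) := by
  rw [Aop_false_eq, Finset.sum_mul]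
  refine Finset.sum_congr rfl fun j hj => ?_
  rw [Finset.mem_erase] at hj
  rw [Finset.sum_mul]
  refine Finset.sum_congr rfl fun b _ => ?_
  calc ((Ei i0 a b * Ei j b a) * LamD lam i0 : EndW N n)
      = Ei i0 a b * (Ei j b a * LamD lam i0) := mul_assoc _ _ _
    _ = Ei i0 a b * (LamD lam i0 * Ei j b a) := by
        rw [← LamD_mul_Ei_comm lam (Ne.symm hj.1)]
    _ = (Ei i0 a b * LamD lam i0) * Ei j b a := (mul_assoc _ _ _).symm
    _ = (lam b • Ei i0 a b) * Ei j b a := by rw [Ei_mul_LamD_self]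
    _ = lam b • (Ei i0 a b * Ei j b a) := smul_mul_assoc _ _ _

lemma cD (lam : Fin N → ℂ) (a : Fin N) (hlam : Function.Injective lam) :
    (LamD lam i0 * Dop lam a - Dop lam a * LamD lam i0 : EndW N n)
      = ∑ b ∈ Finset.univ.erase a,
          (lam b • (Ei i0 a b * Etot b a) - lam b • (Etot a b * Ei i0 b a)) := by
  rw [Dop, Finset.mul_sum, Finset.sum_mul, ← Finset.sum_sub_distrib]
  refine Finset.sum_congr rfl fun b hb => ?_
  rw [Finset.mem_erase] at hb
  have hne : lam a - lam b ≠ 0 := sub_ne_zero.mpr fun h => hb.1 (hlam h.symm)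
  have hX := LamD_comm_Etot lam i0 a b
  have hY := LamD_comm_Etot lam i0 b a
  have hS : (LamD lam i0 * Etot a a : EndW N n) = Etot a a * LamD lam i0 :=
    (commute_Etot_LamD lam i0 a).symm
  rw [mul_smul_comm, smul_mul_assoc, ← smul_sub]
  have expand : (LamD lam i0 * (Etot a b * Etot b a - Etot a a)
      - (Etot a b * Etot b a - Etot a a) * LamD lam i0 : EndW N n)
      = (LamD lam i0 * Etot a b - Etot a b * LamD lam i0) * Etot b a
        + Etot a b * (LamD lam i0 * Etot b a - Etot b a * LamD lam i0)
        - (LamD lam i0 * Etot a a - Etot a a * LamD lam i0) := by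
    noncomm_ring
  rw [expand, hX, hY, hS, sub_self, sub_zero, smul_mul_assoc, mul_smul_comm,
    smul_add, smul_smul, smul_smul]
  rw [div_mul_cancel₀ _ hne]
  have : lam b / (lam a - lam b) * (lam b - lam a) = -lam b := by
    field_simp
    ring
  rw [this, neg_smul, ← sub_eq_add_neg]

lemma cExp (lam : Fin N → ℂ) (a : Fin N) :
    (∑ b ∈ Finset.univ.erase a,
        (lam b • (Ei i0 a b * Etot b a) - lam b • (Etot a b * Ei i0 b a)) : EndW N n)
      = (∑ j ∈ Finset.univ.erase i0, ∑ b : Fin N, lam b • (Ei i0 a b * Ei j b a))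
        - ∑ j ∈ Finset.univ.erase i0, ∑ b : Fin N, lam b • (Ei j a b * Ei i0 b a) := by
  have hb1 : ∀ b : Fin N,
      (lam b • (Ei i0 a b * Etot b a) - lam b • (Etot a b * Ei i0 b a) : EndW N n)
      = ∑ j ∈ Finset.univ.erase i0,
          (lam b • (Ei i0 a b * Ei j b a) - lam b • (Ei j a b * Ei i0 b a)) := by
    intro b
    rw [Etot, Etot, Finset.mul_sum, Finset.sum_mul]
    rw [← Finset.add_sum_erase _ (fun i => (Ei i0 a b * Ei i b a : EndW N n))
      (Finset.mem_univ i0)]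
    rw [← Finset.add_sum_erase _ (fun i => (Ei i a b * Ei i0 b a : EndW N n))
      (Finset.mem_univ i0)]
    rw [Ei_mul_Ei_cancel]
    rw [smul_add, smul_add, Finset.smul_sum, Finset.smul_sum, Finset.sum_sub_distrib]
    abel
  simp only [hb1]
  rw [Finset.sum_comm, ← Finset.sum_sub_distrib]
  refine Finset.sum_congr rfl fun j hj => ?_
  rw [Finset.mem_erase] at hj
  rw [← Finset.sum_sub_distrib, ← Finset.add_sum_erase _ _ (Finset.mem_univ a)]
  have hz : (lam a • (Ei i0 a a * Ei j a a) - lam a • (Ei j a a * Ei i0 a a) : EndW N n) = 0 := by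
    rw [Ei_mul_Ei_comm (Ne.symm hj.1), sub_self]
  rw [hz, zero_add]

lemma keyIdentity (z : Fin n → ℂ) (lam : Fin N → ℂ) (a : Fin N)
    (hi0 : ∀ j, j ≠ i0 → i0 < j) (hlam : Function.Injective lam) :
    (LamD lam i0 * Hop z a i0 (fun _ => True) + LamD lam i0 * Dop lam a : EndW N n)
      = Hop z a i0 (fun _ => False) * LamD lam i0 + Dop lam a * LamD lam i0 := by
  have core : (LamD lam i0 * Aop a i0 (fun _ => True) + LamD lam i0 * Dop lam a : EndW N n)
      = Aop a i0 (fun _ => False) * LamD lam i0 + Dop lam a * LamD lam i0 := by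
    have h := cD (i0 := i0) lam a hlam
    rw [cExp lam a] at h
    rw [cA lam a, cB lam a]
    rw [sub_eq_sub_iff_add_eq_add] at h
    calc (∑ j ∈ Finset.univ.erase i0, ∑ b : Fin N, lam b • (Ei j a b * Ei i0 b a) : EndW N n)
          + LamD lam i0 * Dop lam a
        = LamD lam i0 * Dop lam a
          + ∑ j ∈ Finset.univ.erase i0, ∑ b : Fin N, lam b • (Ei j a b * Ei i0 b a) :=
          add_comm _ _
      _ = (∑ j ∈ Finset.univ.erase i0, ∑ b : Fin N, lam b • (Ei i0 a b * Ei j b a))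
          + Dop lam a * LamD lam i0 := h
  rw [Hop, Hop, mul_add, mul_add, add_mul, add_mul]
  rw [LamD_Zop_comm z lam a, LamD_Cop_comm lam a hi0]
  calc (Zop z a * LamD lam i0 + LamD lam i0 * Aop a i0 (fun _ => True) : EndW N n)
        + Cop a i0 * LamD lam i0 + LamD lam i0 * Dop lam a
      = Zop z a * LamD lam i0 + Cop a i0 * LamD lam i0
        + (LamD lam i0 * Aop a i0 (fun _ => True) + LamD lam i0 * Dop lam a) := by abel
    _ = Zop z a * LamD lam i0 + Cop a i0 * LamD lam i0
        + (Aop a i0 (fun _ => False) * LamD lam i0 + Dop lam a * LamD lam i0) := by rw [core]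
    _ = _ := by abel

end QKZ

open QKZ

/-- The key identity in the proof of compatibility of the qKZ and dynamical operators:
`[Λ^{(1)}(λ) R^{(1,n)}(z_1−z_n) ⋯ R^{(1,2)}(z_1−z_2), L_a(z;λ)] = 0` on `W = (ℂ^N)^{⊗n}`. -/
theorem key_commutation_with_L {N n : ℕ} (hn : 0 < n)
    (lam : Fin N → ℂ) (hlam0 : ∀ a, lam a ≠ 0) (hlam : Function.Injective lam)
    (z : Fin n → ℂ) (hz : ∀ j : Fin n, (⟨0, hn⟩ : Fin n) ≠ j → z ⟨0, hn⟩ - z j ≠ -1)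
    (a : Fin N) :
    LamD lam ⟨0, hn⟩ * Kright z ⟨0, hn⟩ * Ldyn z lam a
      - Ldyn z lam a * (LamD lam ⟨0, hn⟩ * Kright z ⟨0, hn⟩) = 0 := by
  set i0 : Fin n := ⟨0, hn⟩ with hi0def
  have hi0 : ∀ j : Fin n, j ≠ i0 → i0 < j := by
    intro j hj
    have hv : j.val ≠ 0 := fun h => hj (Fin.ext h)
    have : (i0 : Fin n).val < j.val := by
      simp only [hi0def]
      omega
    exact this
  set Λ : EndW N n := LamD lam i0
  set K : EndW N n := Kright z i0
  set A2 : EndW N n := (2⁻¹ : ℂ) • (Etot a a : EndW N n) ^ 2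
  set HF : EndW N n := Hop z a i0 (fun _ => False)
  set HT : EndW N n := Hop z a i0 (fun _ => True)
  set D : EndW N n := Dop lam a
  have cS1 : Commute (Etot a a : EndW N n) Λ := commute_Etot_LamD lam i0 a
  have cS2 : Commute (Etot a a : EndW N n) K := commute_Etot_Kright z i0 a a
  have e1 : Commute (Λ * K) A2 :=
    ((cS1.symm.mul_left cS2.symm).pow_right 2).smul_right _
  have e2 : K * HF = HT * K := Kright_swap z a hi0
  have e3 : K * D = D * K := by
    refine (Commute.sum_right _ _ _ fun b _ => ?_)
    exact (((commute_Etot_Kright z i0 a b).symm.mul_right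
      (commute_Etot_Kright z i0 b a).symm).sub_right
      (commute_Etot_Kright z i0 a a).symm).smul_right _
  have e4 : Λ * HT + Λ * D = HF * Λ + D * Λ := keyIdentity z lam a hi0 hlam
  have hL : Ldyn z lam a = A2 - HF - D := Ldyn_eq z lam a hi0
  rw [hL]
  simp only [mul_sub, sub_mul]
  have hH : Λ * K * HF = (Λ * HT) * K := by rw [mul_assoc, e2, ← mul_assoc]
  have hD2 : Λ * K * D = (Λ * D) * K := by rw [mul_assoc, e3, ← mul_assoc]
  have hH2 : HF * (Λ * K) = (HF * Λ) * K := (mul_assoc _ _ _).symm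
  have hD3 : D * (Λ * K) = (D * Λ) * K := (mul_assoc _ _ _).symm
  rw [hH, hD2, hH2, hD3, e1.eq]
  have key : (Λ * HT) * K + (Λ * D) * K = (HF * Λ) * K + (D * Λ) * K := by
    rw [← add_mul, ← add_mul, e4]
  calc A2 * (Λ * K) - Λ * HT * K - Λ * D * K - (A2 * (Λ * K) - HF * Λ * K - D * Λ * K)
      = ((HF * Λ) * K + (D * Λ) * K) - ((Λ * HT) * K + (Λ * D) * K) := by abel
    _ = 0 := by rw [key, sub_self]
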